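/- arXiv:1503.09034 — 5 statements merged into one kernel-verified Lean document; each statement's English description precedes it below -/
import Mathlib

section
/- Let π : X → Y be a surjective map between quasi-metric spaces. Then π is a submetry if and only if for all p̂, q̂ ∈ Y and all p ∈ π⁻¹(p̂), there exists q ∈ π⁻¹(q̂) such that d_X(p,q) = d_Y(p̂,q̂) = d_X(π⁻¹(p̂), π⁻¹(q̂)) = d_X(p, π⁻¹(q̂)). -/
/-- A quasi-metric space structure: a symmetric function vanishing exactly on the
diagonal satisfying a quasi-triangle inequality with constant `C ≥ 1`. -/
structure QuasiDist (X : Type*) where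
  d : X → X → ℝ
  nonneg : ∀ p q, 0 ≤ d p q
  symm : ∀ p q, d p q = d q p
  eq_zero_iff : ∀ p q, d p q = 0 ↔ p = q
  C : ℝ
  one_le_C : 1 ≤ C
  triangle : ∀ p p' q, d p q ≤ C * (d p p' + d p' q)

/-- Closed ball. -/
def QuasiDist.ball {X : Type*} (D : QuasiDist X) (p : X) (r : ℝ) : Set X :=
  {q | D.d q p ≤ r}

/-- Distance between two sets. -/
noncomputable def QuasiDist.setDist {X : Type*} (D : QuasiDist X) (A B : Set X) : ℝ :=
  sInf (Set.image2 D.d A B)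

/-- A family of Besicovitch balls: finitely many closed balls (with positive radii)
with a common point, such that no center belongs to another ball of the family. -/
def QuasiDist.IsBesicovitch {X : Type*} (D : QuasiDist X) (m : ℕ)
    (x : Fin m → X) (r : Fin m → ℝ) : Prop :=
  (∀ i, 0 < r i) ∧ (∀ i j, i ≠ j → r j < D.d (x i) (x j)) ∧ (∃ p, ∀ i, D.d p (x i) ≤ r i)

/-- Weak Besicovitch Covering Property with constant `Q`. -/
def QuasiDist.WBCPConst {X : Type*} (D : QuasiDist X) (Q : ℕ) : Prop :=
  ∀ (m : ℕ) (x : Fin m → X) (r : Fin m → ℝ), D.IsBesicovitch m x r → m ≤ Q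

/-- Weak Besicovitch Covering Property. -/
def QuasiDist.WBCP {X : Type*} (D : QuasiDist X) : Prop :=
  ∃ Q : ℕ, D.WBCPConst Q

lemma QuasiDist.setDist_le {X : Type*} (D : QuasiDist X) {A B : Set X} {a b : X}
    (ha : a ∈ A) (hb : b ∈ B) : D.setDist A B ≤ D.d a b := by
  apply csInf_le
  · exact ⟨0, by rintro x ⟨p, hp, q, hq, rfl⟩; exact D.nonneg p q⟩
  · exact Set.mem_image2_of_mem ha hb

lemma QuasiDist.le_setDist {X : Type*} (D : QuasiDist X) {A B : Set X} {t : ℝ}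
    (hA : A.Nonempty) (hB : B.Nonempty) (h : ∀ a ∈ A, ∀ b ∈ B, t ≤ D.d a b) :
    t ≤ D.setDist A B := by
  apply le_csInf
  · exact ⟨_, Set.mem_image2_of_mem hA.choose_spec hB.choose_spec⟩
  · rintro x ⟨p, hp, q, hq, rfl⟩; exact h p hp q hq

/-- characterization of submetries via parallel lifts of distances. -/
theorem submetry_characterization {X Y : Type*} (DX : QuasiDist X) (DY : QuasiDist Y)
    (π : X → Y) (hsurj : Function.Surjective π) :
    (∀ (p : X) (r : ℝ), 0 < r → π '' DX.ball p r = DY.ball (π p) r) ↔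
      (∀ (phat qhat : Y) (p : X), p ∈ π ⁻¹' {phat} →
        ∃ q ∈ π ⁻¹' {qhat},
          DX.d p q = DY.d phat qhat ∧
          DY.d phat qhat = DX.setDist (π ⁻¹' {phat}) (π ⁻¹' {qhat}) ∧
          DX.setDist (π ⁻¹' {phat}) (π ⁻¹' {qhat}) = DX.setDist {p} (π ⁻¹' {qhat})) := by
  
  constructor
  · intro hsub phat qhat p hp
    simp only [Set.mem_preimage, Set.mem_singleton_iff] at hp
    have key : ∀ x ∈ π ⁻¹' {phat}, ∀ y ∈ π ⁻¹' {qhat}, DY.d phat qhat ≤ DX.d x y := by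
      intro x hx y hy
      simp only [Set.mem_preimage, Set.mem_singleton_iff] at hx hy
      rcases eq_or_lt_of_le (DX.nonneg x y) with h0 | hpos
      · have hxy : x = y := (DX.eq_zero_iff x y).1 h0.symm
        have : phat = qhat := by rw [← hx, ← hy, hxy]
        rw [this, (DY.eq_zero_iff qhat qhat).2 rfl, ← h0]
      · have hy' : y ∈ DX.ball x (DX.d x y) := by
          simp only [QuasiDist.ball, Set.mem_setOf_eq, DX.symm y x, le_refl]
        have : π y ∈ DY.ball (π x) (DX.d x y) := by
          rw [← hsub x _ hpos]; exact ⟨y, hy', rfl⟩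
        simp only [QuasiDist.ball, Set.mem_setOf_eq] at this
        rw [← hx, ← hy, DY.symm (π x) (π y)]
        exact this
    have hpmem : p ∈ π ⁻¹' {phat} := by simp [hp]
    rcases eq_or_lt_of_le (DY.nonneg phat qhat) with h0 | hpos
    · have hpq : phat = qhat := (DY.eq_zero_iff phat qhat).1 h0.symm
      have hqmem : p ∈ π ⁻¹' {qhat} := by simp [hp, hpq]
      refine ⟨p, hqmem, ?_, ?_, ?_⟩
      · rw [(DX.eq_zero_iff p p).2 rfl, ← h0]
      · rw [← h0]
        refine le_antisymm ?_ ?_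
        · exact DX.le_setDist ⟨p, hpmem⟩ ⟨p, hqmem⟩ (fun a _ b _ => DX.nonneg a b)
        · have := DX.setDist_le hpmem hqmem
          rwa [(DX.eq_zero_iff p p).2 rfl] at this
      · refine le_antisymm ?_ ?_
        · have h1 : DX.setDist (π ⁻¹' {phat}) (π ⁻¹' {qhat}) ≤ 0 := by
            have := DX.setDist_le hpmem hqmem
            rwa [(DX.eq_zero_iff p p).2 rfl] at this
          have h2 : (0:ℝ) ≤ DX.setDist {p} (π ⁻¹' {qhat}) :=
            DX.le_setDist ⟨p, rfl⟩ ⟨p, hqmem⟩ (fun a _ b _ => DX.nonneg a b)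
          linarith
        · have h1 : DX.setDist {p} (π ⁻¹' {qhat}) ≤ 0 := by
            have := DX.setDist_le (Set.mem_singleton p) hqmem
            rwa [(DX.eq_zero_iff p p).2 rfl] at this
          have h2 : (0:ℝ) ≤ DX.setDist (π ⁻¹' {phat}) (π ⁻¹' {qhat}) :=
            DX.le_setDist ⟨p, hpmem⟩ ⟨p, hqmem⟩ (fun a _ b _ => DX.nonneg a b)
          linarith
    · have hqin : qhat ∈ DY.ball (π p) (DY.d phat qhat) := by
        simp only [QuasiDist.ball, Set.mem_setOf_eq, hp, DY.symm qhat phat, le_refl]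
      rw [← hsub p _ hpos] at hqin
      obtain ⟨q, hq, hπq⟩ := hqin
      simp only [QuasiDist.ball, Set.mem_setOf_eq] at hq
      have hqmem : q ∈ π ⁻¹' {qhat} := by simp [hπq]
      have hle : DX.d p q ≤ DY.d phat qhat := by rwa [DX.symm p q]
      have hge : DY.d phat qhat ≤ DX.d p q := key p hpmem q hqmem
      have heq : DX.d p q = DY.d phat qhat := le_antisymm hle hge
      refine ⟨q, hqmem, heq, ?_, ?_⟩
      · refine le_antisymm (DX.le_setDist ⟨p, hpmem⟩ ⟨q, hqmem⟩ key) ?_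
        calc DX.setDist (π ⁻¹' {phat}) (π ⁻¹' {qhat}) ≤ DX.d p q := DX.setDist_le hpmem hqmem
          _ = DY.d phat qhat := heq
      · refine le_antisymm ?_ ?_
        · calc DX.setDist (π ⁻¹' {phat}) (π ⁻¹' {qhat}) ≤ DX.d p q := DX.setDist_le hpmem hqmem
            _ = DY.d phat qhat := heq
            _ ≤ DX.setDist {p} (π ⁻¹' {qhat}) := by
                refine DX.le_setDist ⟨p, rfl⟩ ⟨q, hqmem⟩ ?_
                intro a ha b hb
                rw [Set.mem_singleton_iff] at ha
                exact key a (by simp [ha, hp]) b hb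
        · calc DX.setDist {p} (π ⁻¹' {qhat}) ≤ DX.d p q :=
                DX.setDist_le (Set.mem_singleton p) hqmem
            _ = DY.d phat qhat := heq
            _ ≤ DX.setDist (π ⁻¹' {phat}) (π ⁻¹' {qhat}) := DX.le_setDist ⟨p, hpmem⟩ ⟨q, hqmem⟩ key
  · intro h p r hr
    apply le_antisymm
    · rintro yhat ⟨q, hq, rfl⟩
      simp only [QuasiDist.ball, Set.mem_setOf_eq] at hq ⊢
      obtain ⟨q', hq', h1, h2, h3⟩ := h (π p) (π q) p rfl
      have : DY.d (π p) (π q) ≤ DX.d p q := by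
        rw [h2, h3]
        calc DX.setDist {p} (π ⁻¹' {π q}) ≤ DX.d p q :=
              DX.setDist_le (Set.mem_singleton p) rfl
          _ = DX.d p q := rfl
      rw [DY.symm (π q) (π p)]
      calc DY.d (π p) (π q) ≤ DX.d p q := this
        _ = DX.d q p := DX.symm p q
        _ ≤ r := hq
    · intro yhat hy
      simp only [QuasiDist.ball, Set.mem_setOf_eq] at hy
      obtain ⟨q, hq, h1, h2, h3⟩ := h (π p) yhat p rfl
      simp only [Set.mem_preimage, Set.mem_singleton_iff] at hq
      refine ⟨q, ?_, hq⟩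
      simp only [QuasiDist.ball, Set.mem_setOf_eq]
      calc DX.d q p = DX.d p q := DX.symm q p
        _ = DY.d (π p) yhat := h1
        _ = DY.d yhat (π p) := DY.symm _ _
        _ ≤ r := hy
end

section
/- If there exists a submetry from a quasi-metric space (X, d_X) onto a quasi-metric space (Y, d_Y), and (X, d_X) satisfies the Weak Besicovitch Covering Property with constant Q, then (Y, d_Y) satisfies the Weak Besicovitch Covering Property with constant Q. -/
/-- a submetry pushes WBCP (with constant `Q`) forward from `X` to `Y`. -/
theorem wbcp_of_submetry {X Y : Type*} (DX : QuasiDist X) (DY : QuasiDist Y)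
    (π : X → Y) (hsurj : Function.Surjective π)
    (hsub : ∀ (p : X) (r : ℝ), 0 < r → π '' DX.ball p r = DY.ball (π p) r)
    (Q : ℕ) (hX : DX.WBCPConst Q) :
    DY.WBCPConst Q := by
  intro m y r ⟨hr, hsep, q, hq⟩
  obtain ⟨p, hp⟩ := hsurj q
  have hx : ∀ i, ∃ x, π x = y i ∧ DX.d p x ≤ r i := by
    intro i
    have : y i ∈ DY.ball (π p) (r i) := by
      show DY.d (y i) (π p) ≤ r i
      rw [hp, DY.symm]; exact hq i
    rw [← hsub p (r i) (hr i)] at this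
    obtain ⟨x, hxb, hxe⟩ := this
    exact ⟨x, hxe, (DX.symm p x) ▸ hxb⟩
  choose x hxe hxd using hx
  apply hX m x r
  refine ⟨hr, ?_, p, hxd⟩
  intro i j hij
  by_contra h
  push_neg at h
  have : y i ∈ DY.ball (y j) (r j) := by
    rw [← hxe j, ← hsub (x j) (r j) (hr j)]
    exact ⟨x i, h, hxe i⟩
  exact absurd this (not_le.mpr (hsep i j hij))
end

section
/- Let (X, d_X) be a quasi-metric space, Y a nonempty set, and π : X → Y a surjective map with parallel fibers, i.e., for all p̂, q̂ ∈ Y and all p ∈ π⁻¹(p̂) there exists q ∈ π⁻¹(q̂) with d_X(π⁻¹(p̂), π⁻¹(q̂)) = d_X(p,q). Then d_Y(p̂, q̂) := d_X(π⁻¹(p̂), π⁻¹(q̂)) defines a quasi-distance on Y (with the same quasi-triangle constant C as d_X), and π is a submetry from (X, d_X) onto (Y, d_Y). -/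
/-- if the fibers of a surjection `π` are parallel, then the distance
between fibers defines a quasi-distance on `Y` (with the same quasi-triangle constant)
and `π` is a submetry. -/
theorem parallel_fibers_give_submetry {X Y : Type*} (DX : QuasiDist X)
    (π : X → Y) (hsurj : Function.Surjective π)
    (hpar : ∀ (phat qhat : Y) (p : X), p ∈ π ⁻¹' {phat} →
      ∃ q ∈ π ⁻¹' {qhat}, DX.setDist (π ⁻¹' {phat}) (π ⁻¹' {qhat}) = DX.d p q) :
    letI dY : Y → Y → ℝ := fun phat qhat => DX.setDist (π ⁻¹' {phat}) (π ⁻¹' {qhat})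
    (∀ phat qhat, 0 ≤ dY phat qhat) ∧
    (∀ phat qhat, dY phat qhat = dY qhat phat) ∧
    (∀ phat qhat, dY phat qhat = 0 ↔ phat = qhat) ∧
    (∀ phat phat' qhat, dY phat qhat ≤ DX.C * (dY phat phat' + dY phat' qhat)) ∧
    (∀ (p : X) (r : ℝ), 0 < r → π '' DX.ball p r = {qhat | dY qhat (π p) ≤ r}) := by

  have hfib : ∀ y : Y, (π ⁻¹' {y}).Nonempty := fun y => hsurj y
  have hbdd : ∀ A B : Set X, BddBelow (Set.image2 DX.d A B) := by
    intro A B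
    refine ⟨0, ?_⟩
    rintro x ⟨p, hp, q, hq, rfl⟩
    exact DX.nonneg p q
  have hle : ∀ (A B : Set X) (p q : X), p ∈ A → q ∈ B → DX.setDist A B ≤ DX.d p q :=
    fun A B p q hp hq => csInf_le (hbdd A B) ⟨p, hp, q, hq, rfl⟩
  have hnonneg : ∀ phat qhat, 0 ≤ DX.setDist (π ⁻¹' {phat}) (π ⁻¹' {qhat}) := by
    intro phat qhat
    apply le_csInf
    · obtain ⟨p, hp⟩ := hfib phat
      obtain ⟨q, hq⟩ := hfib qhat
      exact ⟨_, ⟨p, hp, q, hq, rfl⟩⟩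
    · rintro x ⟨p, hp, q, hq, rfl⟩
      exact DX.nonneg p q
  have hsymm : ∀ phat qhat, DX.setDist (π ⁻¹' {phat}) (π ⁻¹' {qhat})
      = DX.setDist (π ⁻¹' {qhat}) (π ⁻¹' {phat}) := by
    intro phat qhat
    unfold QuasiDist.setDist
    congr 1
    ext x
    constructor
    · rintro ⟨p, hp, q, hq, rfl⟩
      exact ⟨q, hq, p, hp, DX.symm q p⟩
    · rintro ⟨q, hq, p, hp, rfl⟩
      exact ⟨p, hp, q, hq, DX.symm p q⟩
  refine ⟨hnonneg, hsymm, ?_, ?_, ?_⟩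
  · intro phat qhat
    constructor
    · intro h0
      obtain ⟨p, hp⟩ := hfib phat
      obtain ⟨q, hq, heq⟩ := hpar phat qhat p hp
      have : p = q := (DX.eq_zero_iff p q).mp (heq ▸ h0)
      have hp' : π p = phat := hp
      have hq' : π q = qhat := hq
      rw [← hp', ← hq', this]
    · rintro rfl
      obtain ⟨p, hp⟩ := hfib phat
      refine le_antisymm ?_ (hnonneg _ _)
      have := hle _ _ p p hp hp
      rwa [(DX.eq_zero_iff p p).mpr rfl] at this
  · intro phat phat' qhat
    obtain ⟨p, hp⟩ := hfib phat
    obtain ⟨p', hp', h1⟩ := hpar phat phat' p hp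
    obtain ⟨q, hq, h2⟩ := hpar phat' qhat p' hp'
    calc DX.setDist (π ⁻¹' {phat}) (π ⁻¹' {qhat}) ≤ DX.d p q := hle _ _ p q hp hq
      _ ≤ DX.C * (DX.d p p' + DX.d p' q) := DX.triangle p p' q
      _ = _ := by rw [← h1, ← h2]
  · intro p r _
    ext qhat
    constructor
    · rintro ⟨q, hq, rfl⟩
      show DX.setDist (π ⁻¹' {π q}) (π ⁻¹' {π p}) ≤ r
      exact le_trans (hle (π ⁻¹' {π q}) (π ⁻¹' {π p}) q p rfl rfl) hq
    · intro hq
      obtain ⟨q, hqmem, heq⟩ := hpar (π p) qhat p rfl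
      have hq' : DX.setDist (π ⁻¹' {qhat}) (π ⁻¹' {π p}) ≤ r := hq
      rw [hsymm qhat (π p)] at hq'
      have hdist : DX.d p q ≤ r := by
        rw [← heq]
        exact hq' 
      exact ⟨q, by rw [QuasiDist.ball]; simp only [Set.mem_setOf_eq]; rw [DX.symm]; exact hdist, hqmem⟩
end

section
/- Let ℝ² carry the group law of addition and the dilations δ_λ(x,y) = (λx, λ^s y) for some s > 0. Let ρ be a left-invariant, one-homogeneous quasi-distance on ℝ² whose closed unit ball centered at the origin is {(x,y) : |x|^a + |y|^b ≤ 1} for some a, b > 0. If 0 < a < s, then for every Q ∈ ℕ there exists a family of Besicovitch balls in (ℝ², ρ) of cardinality greater than Q; i.e., (ℝ², ρ) does not satisfy the Weak Besicovitch Covering Property. -/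
/-- Anisotropic dilations on `ℝ²`: `δ_λ(x,y) = (λx, λ^s y)`. -/
noncomputable def dil (s l : ℝ) (v : ℝ × ℝ) : ℝ × ℝ := (l * v.1, l ^ s * v.2)

open Real Finset
set_option linter.unusedSectionVars false

/-- `1 - x^p ≤ max 1 p * (1 - x)` for `x ∈ [0,1]`, `p > 0`. -/
lemma nw_one_sub_rpow {p x : ℝ} (hp : 0 < p) (hx0 : 0 ≤ x) (hx1 : x ≤ 1) :
    1 - x ^ p ≤ max 1 p * (1 - x) := by
  rcases le_or_gt 1 p with h | h
  · rw [max_eq_right h]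
    have hB := one_add_mul_self_le_rpow_one_add (s := x - 1) (by linarith) h
    have : (1 + (x-1)) = x := by ring
    rw [this] at hB
    nlinarith
  · rw [max_eq_left h.le]
    rcases eq_or_lt_of_le hx0 with h0 | h0
    · rw [← h0, Real.zero_rpow hp.ne']
      linarith
    · have : x ^ (1:ℝ) ≤ x ^ p := Real.rpow_le_rpow_of_exponent_ge h0 hx1 h.le
      rw [Real.rpow_one] at this
      linarith

noncomputable def nwG (a b : ℝ) : ℝ := 4 * (2:ℝ) ^ a * max 1 b * max 1 b⁻¹

noncomputable def nwC (s a b : ℝ) (ν : ℝ) : ℝ :=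
  min (min (1/2) ((2:ℝ) ^ (-(b*s)⁻¹))) ((ν / nwG a b) ^ (s-a)⁻¹)

noncomputable def nwNu (s a b : ℝ) : ℕ → ℝ
  | 0 => 1/2
  | k+1 => (nwC s a b (nwNu s a b k)) ^ a * nwNu s a b k / nwG a b

section params
variable {s a b : ℝ} (ha : 0 < a) (hb : 0 < b) (hs : 0 < s) (has : a < s)

include ha hb in
lemma nwG_pos : 0 < nwG a b := by
  have h1 : (0:ℝ) < (2:ℝ) ^ a := Real.rpow_pos_of_pos (by norm_num) a
  have h2 : (0:ℝ) < max 1 b := lt_max_of_lt_left one_pos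
  have h3 : (0:ℝ) < max 1 b⁻¹ := lt_max_of_lt_left one_pos
  unfold nwG; positivity

include ha hb in
lemma nwG_ge_two_rpow : (2:ℝ) ^ a ≤ nwG a b := by
  have h1 : (0:ℝ) < (2:ℝ) ^ a := Real.rpow_pos_of_pos (by norm_num) a
  have h2 : (1:ℝ) ≤ max 1 b := le_max_left _ _
  have h3 : (1:ℝ) ≤ max 1 b⁻¹ := le_max_left _ _
  calc (2:ℝ) ^ a = 1 * ((2:ℝ)^a) * 1 * 1 := by ring
  _ ≤ 4 * (2:ℝ)^a * max 1 b * max 1 b⁻¹ := by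
      apply mul_le_mul _ h3 (by norm_num) (by positivity)
      apply mul_le_mul _ h2 (by norm_num) (by positivity)
      nlinarith
  _ = nwG a b := rfl

include ha hb in
lemma nwG_ge_one : (1:ℝ) ≤ nwG a b := by
  have h1 : (1:ℝ) ≤ (2:ℝ) ^ a := by
    calc (1:ℝ) = (2:ℝ) ^ (0:ℝ) := by simp
    _ ≤ (2:ℝ) ^ a := Real.rpow_le_rpow_of_exponent_le (by norm_num) ha.le
  exact h1.trans (nwG_ge_two_rpow ha hb)

include ha hb hs has in
lemma nwC_pos {ν : ℝ} (hν : 0 < ν) : 0 < nwC s a b ν := by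
  have hG := nwG_pos ha hb
  apply lt_min (lt_min (by norm_num) (Real.rpow_pos_of_pos (by norm_num) _))
  exact Real.rpow_pos_of_pos (by positivity) _

lemma nwC_le_half {ν : ℝ} : nwC s a b ν ≤ 1/2 :=
  le_trans (min_le_left _ _) (min_le_left _ _)

lemma nwC_le_base : nwC s a b ν ≤ (2:ℝ) ^ (-(b*s)⁻¹) :=
  le_trans (min_le_left _ _) (min_le_right _ _)

include ha hb hs has in
lemma nwC_pow_sub {ν : ℝ} (hν : 0 < ν) : (nwC s a b ν) ^ (s - a) ≤ ν / nwG a b := by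
  have hG := nwG_pos ha hb
  have h1 : nwC s a b ν ≤ (ν / nwG a b) ^ (s-a)⁻¹ := min_le_right _ _
  have h2 : (nwC s a b ν) ^ (s-a) ≤ ((ν / nwG a b) ^ (s-a)⁻¹) ^ (s-a) :=
    Real.rpow_le_rpow (nwC_pos ha hb hs has hν).le h1 (by linarith)
  rwa [Real.rpow_inv_rpow (by positivity) (sub_ne_zero.2 has.ne')] at h2

include ha hb hs has in
lemma nwNu_pos : ∀ k, 0 < nwNu s a b k := by
  intro k
  induction k with
  | zero => norm_num [nwNu]
  | succ n ih =>
    have hG := nwG_pos ha hb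
    have hc := nwC_pos ha hb hs has ih
    have : (0:ℝ) < (nwC s a b (nwNu s a b n)) ^ a := Real.rpow_pos_of_pos hc a
    show 0 < (nwC s a b (nwNu s a b n)) ^ a * nwNu s a b n / nwG a b
    positivity

include ha hb hs has in
lemma nwNu_le_half : ∀ k, nwNu s a b k ≤ 1/2 := by
  intro k
  induction k with
  | zero => norm_num [nwNu]
  | succ n ih =>
    have hν := nwNu_pos ha hb hs has n
    have hc := nwC_pos ha hb hs has hν
    have hca : (nwC s a b (nwNu s a b n)) ^ a ≤ 1 :=
      Real.rpow_le_one hc.le (nwC_le_half.trans (by norm_num)) ha.le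
    have hG := nwG_ge_one ha hb
    show (nwC s a b (nwNu s a b n)) ^ a * nwNu s a b n / nwG a b ≤ 1/2
    calc (nwC s a b (nwNu s a b n)) ^ a * nwNu s a b n / nwG a b
        ≤ 1 * nwNu s a b n / 1 := by
          apply div_le_div₀ (by positivity) (mul_le_mul_of_nonneg_right hca hν.le) one_pos hG
    _ = nwNu s a b n := by ring
    _ ≤ 1/2 := ih

/-- The scale ratio sequence. -/
noncomputable def nwc (s a b : ℝ) (k : ℕ) : ℝ := nwC s a b (nwNu s a b k)

/-- Ratio over an interval. -/
noncomputable def nwP (s a b : ℝ) (i j : ℕ) : ℝ := ∏ l ∈ Finset.Ico i j, nwc s a b l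

/-- The radii. -/
noncomputable def nwR (s a b : ℝ) (k : ℕ) : ℝ := (∏ l ∈ Finset.range k, nwc s a b l)⁻¹

include ha hb hs has in
lemma nwc_pos (k : ℕ) : 0 < nwc s a b k :=
  nwC_pos ha hb hs has (nwNu_pos ha hb hs has k)

include ha hb hs has in
lemma nwP_pos (i j : ℕ) : 0 < nwP s a b i j :=
  Finset.prod_pos fun l _ => nwc_pos ha hb hs has l

include ha hb hs has in
lemma nwP_le_one (i j : ℕ) : nwP s a b i j ≤ 1 :=
  Finset.prod_le_one (fun l _ => (nwc_pos ha hb hs has l).le)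
    (fun l _ => nwC_le_half.trans (by norm_num))

include ha hb hs has in
lemma nwP_le_c (i j : ℕ) (hij : i < j) : nwP s a b i j ≤ nwc s a b i := by
  have h := Finset.prod_eq_prod_Ico_succ_bot hij (nwc s a b)
  unfold nwP
  rw [h]
  have h1 : ∏ l ∈ Finset.Ico (i+1) j, nwc s a b l ≤ 1 := nwP_le_one ha hb hs has _ _
  have h2 := nwc_pos ha hb hs has i
  nlinarith [nwP_pos ha hb hs has (i+1) j]

include ha hb hs has in
lemma nwR_pos (k : ℕ) : 0 < nwR s a b k := by
  unfold nwR
  exact inv_pos.2 (Finset.prod_pos fun l _ => nwc_pos ha hb hs has l)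

include ha hb hs has in
lemma nwR_eq (i j : ℕ) (hij : i ≤ j) : nwR s a b i = nwP s a b i j * nwR s a b j := by
  have h := Finset.prod_range_mul_prod_Ico (nwc s a b) hij
  have hQi : (0:ℝ) < ∏ l ∈ Finset.range i, nwc s a b l :=
    Finset.prod_pos fun l _ => nwc_pos ha hb hs has l
  have hQj : (0:ℝ) < ∏ l ∈ Finset.range j, nwc s a b l :=
    Finset.prod_pos fun l _ => nwc_pos ha hb hs has l
  have hIco : (0:ℝ) < ∏ l ∈ Finset.Ico i j, nwc s a b l :=
    Finset.prod_pos fun l _ => nwc_pos ha hb hs has l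
  unfold nwR nwP
  rw [← h]
  field_simp

include ha hb hs has in
lemma nwR_mono (i j : ℕ) (hij : i ≤ j) : nwR s a b i ≤ nwR s a b j := by
  rw [nwR_eq ha hb hs has i j hij]
  have h1 := nwP_le_one ha hb hs has i j
  have h2 := nwR_pos ha hb hs has j
  nlinarith [nwP_pos ha hb hs has i j]

include ha hb hs has in
lemma nwNu_le (i j : ℕ) (hij : i < j) :
    nwNu s a b j ≤ (nwP s a b i j) ^ a * nwNu s a b i / nwG a b := by
  induction j, hij using Nat.le_induction with
  | base =>
    have hP : nwP s a b i (i+1) = nwc s a b i := by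
      unfold nwP
      rw [Finset.prod_eq_prod_Ico_succ_bot (Nat.lt_succ_self i)]
      simp
    rw [hP]
    exact le_of_eq rfl
  | succ n hn ih =>
    have hin : i ≤ n := le_trans (Nat.le_succ i) hn
    have hG0 := nwG_pos ha hb
    have hG1 := nwG_ge_one ha hb
    have hPn := nwP_pos ha hb hs has i n
    have hcn := nwc_pos ha hb hs has n
    have hνi := nwNu_pos ha hb hs has i
    have hca : (0:ℝ) < (nwc s a b n) ^ a := Real.rpow_pos_of_pos hcn a
    have hPa : (0:ℝ) < (nwP s a b i n) ^ a := Real.rpow_pos_of_pos hPn a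
    have hP1 : nwP s a b i (n+1) = nwP s a b i n * nwc s a b n := by
      unfold nwP
      rw [Finset.prod_Ico_succ_top hin]
    have hmul : (nwP s a b i n * nwc s a b n) ^ a
        = (nwP s a b i n) ^ a * (nwc s a b n) ^ a := Real.mul_rpow hPn.le hcn.le
    have step1 : nwNu s a b (n+1)
        ≤ (nwc s a b n) ^ a * ((nwP s a b i n) ^ a * nwNu s a b i / nwG a b) / nwG a b := by
      have : nwNu s a b (n+1) = (nwc s a b n) ^ a * nwNu s a b n / nwG a b := rfl
      rw [this]
      exact (div_le_div_iff_of_pos_right hG0).mpr (mul_le_mul_of_nonneg_left ih hca.le)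
    refine step1.trans ?_
    rw [hP1, hmul]
    have hX : (0:ℝ) ≤ (nwP s a b i n) ^ a * (nwc s a b n) ^ a * nwNu s a b i := by positivity
    have h2 : (nwc s a b n) ^ a * ((nwP s a b i n) ^ a * nwNu s a b i / nwG a b) / nwG a b
        = (nwP s a b i n) ^ a * (nwc s a b n) ^ a * nwNu s a b i / (nwG a b * nwG a b) := by
      field_simp
    rw [h2]
    apply div_le_div_of_nonneg_left hX hG0
    nlinarith

set_option maxHeartbeats 2000000 in
include ha hb hs has in
lemma nw_core {νi νj c : ℝ} (hνi : 0 < νi) (hνi2 : νi ≤ 1/2)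
    (hνj : 0 < νj) (hνj2 : νj ≤ 1/2) (hc : 0 < c)
    (H1 : νj ≤ c ^ a * νi / nwG a b) (H2 : c ^ (s - a) ≤ νi / nwG a b)
    (H3 : c ^ s ≤ (2:ℝ) ^ (-b⁻¹)) :
    1 < |c * νi ^ a⁻¹ - νj ^ a⁻¹| ^ a + |c ^ s * (1 - νi) ^ b⁻¹ - (1 - νj) ^ b⁻¹| ^ b := by
  set B := max 1 b with hBdef
  set B' := max 1 b⁻¹ with hB'def
  set T := (2:ℝ) ^ a with hTdef
  have hT : 0 < T := Real.rpow_pos_of_pos (by norm_num) a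
  have hB1 : (1:ℝ) ≤ B := le_max_left _ _
  have hB'1 : (1:ℝ) ≤ B' := le_max_left _ _
  have hB0 : (0:ℝ) < B := lt_of_lt_of_le one_pos hB1
  have hB'0 : (0:ℝ) < B' := lt_of_lt_of_le one_pos hB'1
  have hGdef : nwG a b = 4 * T * B * B' := rfl
  have hG0 : (0:ℝ) < nwG a b := by rw [hGdef]; positivity
  set X := c ^ a * νi with hXdef
  have hca0 : (0:ℝ) < c ^ a := Real.rpow_pos_of_pos hc a
  have hX0 : (0:ℝ) < X := by positivity
  -- first coordinate
  have hνia : (0:ℝ) < νi ^ a⁻¹ := Real.rpow_pos_of_pos hνi _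
  have hmix : (c/2 * νi ^ a⁻¹) ^ a = c ^ a / T * νi := by
    rw [Real.mul_rpow (by positivity) (by positivity),
      Real.div_rpow hc.le (by norm_num), Real.rpow_inv_rpow hνi.le ha.ne']
  have hu1 : νj ≤ (c/2 * νi ^ a⁻¹) ^ a := by
    rw [hmix]
    calc νj ≤ X / nwG a b := H1
    _ ≤ X / T := by
        apply div_le_div_of_nonneg_left hX0.le hT
        rw [hGdef]
        have hBB' : (1:ℝ) ≤ B * B' := by nlinarith
        nlinarith [mul_le_mul_of_nonneg_left hBB' (by positivity : (0:ℝ) ≤ 4 * T)]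
    _ = c ^ a / T * νi := by rw [hXdef]; ring
  have hu2 : νj ^ a⁻¹ ≤ c/2 * νi ^ a⁻¹ := by
    have h := Real.rpow_le_rpow hνj.le hu1 (inv_nonneg.2 ha.le)
    rwa [Real.rpow_rpow_inv (by positivity) ha.ne'] at h
  have hupos : 0 < c * νi ^ a⁻¹ - νj ^ a⁻¹ := by nlinarith
  have habs1 : |c * νi ^ a⁻¹ - νj ^ a⁻¹| = c * νi ^ a⁻¹ - νj ^ a⁻¹ := abs_of_pos hupos
  have hua : X ≤ T * |c * νi ^ a⁻¹ - νj ^ a⁻¹| ^ a := by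
    have h := Real.rpow_le_rpow (by positivity)
      (show c/2 * νi ^ a⁻¹ ≤ c * νi ^ a⁻¹ - νj ^ a⁻¹ by nlinarith) ha.le
    rw [hmix, habs1] at *
    rw [habs1]
    calc X = T * (c ^ a / T * νi) := by field_simp; exact hXdef
    _ ≤ T * (c * νi ^ a⁻¹ - νj ^ a⁻¹) ^ a := by
        apply mul_le_mul_of_nonneg_left h hT.le
  have hua0 : 0 < |c * νi ^ a⁻¹ - νj ^ a⁻¹| ^ a :=
    Real.rpow_pos_of_pos (abs_pos.2 hupos.ne') a
  -- second coordinate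
  set ti := (1 - νi) ^ b⁻¹ with htidef
  set tj := (1 - νj) ^ b⁻¹ with htjdef
  have h1νi : (0:ℝ) < 1 - νi := by linarith
  have h1νj : (0:ℝ) < 1 - νj := by linarith
  have hti1 : ti < 1 := Real.rpow_lt_one h1νi.le (by linarith) (inv_pos.2 hb)
  have hti0 : 0 < ti := Real.rpow_pos_of_pos h1νi _
  have htj1 : tj ≤ 1 := Real.rpow_le_one h1νj.le (by linarith) (inv_nonneg.2 hb.le)
  have htj0 : 0 < tj := Real.rpow_pos_of_pos h1νj _
  have htjlb : (2:ℝ) ^ (-b⁻¹) ≤ tj := by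
    have e : ((2:ℝ)) ^ (-b⁻¹) = ((2:ℝ)⁻¹) ^ b⁻¹ := by
      rw [Real.rpow_neg (by norm_num : (0:ℝ) ≤ 2), Real.inv_rpow (by norm_num : (0:ℝ) ≤ 2)]
    rw [e, htjdef]
    apply Real.rpow_le_rpow (by norm_num) (by linarith) (inv_nonneg.2 hb.le)
  have hcs0 : 0 < c ^ s := Real.rpow_pos_of_pos hc s
  have hv0 : 0 < tj - c ^ s * ti := by
    have h := mul_lt_of_lt_one_right hcs0 hti1
    linarith
  have habs2 : |c ^ s * ti - tj| = tj - c ^ s * ti := by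
    rw [abs_sub_comm]; exact abs_of_pos hv0
  set v := tj - c ^ s * ti with hvdef
  have hv1 : v ≤ 1 := by
    have h := mul_pos hcs0 hti0
    rw [hvdef]; linarith
  have h1tj : 1 - tj ≤ B' * νj := by
    have h := nw_one_sub_rpow (inv_pos.2 hb) h1νj.le (by linarith : (1:ℝ) - νj ≤ 1)
    have e : 1 - (1 - νj) = νj := by ring
    rw [e] at h
    exact h
  have hwb : 1 - v ^ b ≤ B * (1 - v) := nw_one_sub_rpow hb hv0.le hv1
  have h1v : 1 - v ≤ B' * νj + c ^ s := by
    have h := mul_le_of_le_one_right hcs0.le hti1.le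
    rw [hvdef]; linarith
  -- the two smallness bounds
  have g1 : 4 * (T * (B * (B' * νj))) ≤ X := by
    have := mul_le_mul_of_nonneg_left H1 (by positivity : (0:ℝ) ≤ 4 * T * B * B')
    rw [← hGdef] at this
    calc 4 * (T * (B * (B' * νj))) = 4 * T * B * B' * νj := by ring
    _ ≤ 4 * T * B * B' * (X / nwG a b) := by rw [← hGdef] at *; exact this
    _ = X := by rw [hGdef]; field_simp
  have hcs_eq : c ^ s = c ^ a * c ^ (s - a) := by
    rw [← Real.rpow_add hc]; ring_nf
  have g2 : 4 * (T * (B * c ^ s)) ≤ X := by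
    have h1 : c ^ a * c ^ (s - a) ≤ c ^ a * (νi / nwG a b) :=
      mul_le_mul_of_nonneg_left H2 hca0.le
    have h2 : 4 * T * B * B' * (c ^ a * (νi / nwG a b)) = X := by
      rw [hGdef, hXdef]; field_simp
    calc 4 * (T * (B * c ^ s)) = 4 * T * B * (c ^ a * c ^ (s-a)) := by rw [hcs_eq]; ring
    _ ≤ 4 * T * B * B' * (c ^ a * c ^ (s-a)) := by
        have hx : (0:ℝ) ≤ c ^ a * c ^ (s-a) := by positivity
        have h4 : (4*T*B : ℝ) ≤ 4*T*B*B' := le_mul_of_one_le_right (by positivity) hB'1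
        exact mul_le_mul_of_nonneg_right h4 hx
    _ ≤ 4 * T * B * B' * (c ^ a * (νi / nwG a b)) := by
        apply mul_le_mul_of_nonneg_left h1 (by positivity)
    _ = X := h2
  -- assemble
  rw [habs2]
  have c1 : T * (1 - v ^ b) ≤ T * (B * (1 - v)) := mul_le_mul_of_nonneg_left hwb hT.le
  have c2 : B * (1 - v) ≤ B * (B' * νj + c ^ s) := mul_le_mul_of_nonneg_left h1v hB0.le
  have c4 : T * (1 - v ^ b) ≤ T * (|c * νi ^ a⁻¹ - νj ^ a⁻¹| ^ a / 2) := by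
    linarith [c1, mul_le_mul_of_nonneg_left c2 hT.le, g1, g2, hua]
  have c5 : 1 - v ^ b ≤ |c * νi ^ a⁻¹ - νj ^ a⁻¹| ^ a / 2 := by
    exact le_of_mul_le_mul_left c4 hT
  linarith

end params

/-- on `ℝ²` with dilations `δ_λ(x,y) = (λx, λ^s y)`, a left-invariant
one-homogeneous quasi-distance whose unit ball at the origin is
`{(x,y) : |x|^a + |y|^b ≤ 1}` with `0 < a < s` admits arbitrarily large families of
Besicovitch balls; in particular WBCP fails. -/
theorem no_wbcp_of_flat_unit_ball (s a b : ℝ) (hs : 0 < s) (ha : 0 < a) (hb : 0 < b)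
    (has : a < s) (ρ : QuasiDist (ℝ × ℝ))
    (hleft : ∀ p q q' : ℝ × ℝ, ρ.d (p + q) (p + q') = ρ.d q q')
    (hhom : ∀ l : ℝ, 0 < l → ∀ p q : ℝ × ℝ, ρ.d (dil s l p) (dil s l q) = l * ρ.d p q)
    (hball : ρ.ball 0 1 = {v : ℝ × ℝ | |v.1| ^ a + |v.2| ^ b ≤ 1}) :
    (∀ Q : ℕ, ∃ (m : ℕ) (x : Fin m → ℝ × ℝ) (r : Fin m → ℝ),
      ρ.IsBesicovitch m x r ∧ Q < m) ∧ ¬ ρ.WBCP := by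
  -- membership characterization of balls
  have key : ∀ (w p : ℝ × ℝ) (r : ℝ), 0 < r →
      (ρ.d w p ≤ r ↔ |(w.1 - p.1)/r| ^ a + |(w.2 - p.2)/r^s| ^ b ≤ 1) := by
    intro w p r hr
    have h1 : ρ.d w p = ρ.d (w - p) 0 := by
      have h := hleft p (w - p) 0
      have e1 : p + (w - p) = w := by abel
      have e2 : p + (0 : ℝ × ℝ) = p := by simp
      rw [e1, e2] at h
      exact h
    have h2 := hhom r⁻¹ (inv_pos.2 hr) (w - p) 0
    have e3 : dil s r⁻¹ 0 = 0 := by simp [dil]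
    rw [e3] at h2
    have ebig : dil s r⁻¹ (w - p) = (r⁻¹ * (w.1 - p.1), r⁻¹ ^ s * (w.2 - p.2)) := by
      simp [dil]
    have hmem : (dil s r⁻¹ (w - p) ∈ ρ.ball 0 1) ↔
        |r⁻¹ * (w.1 - p.1)| ^ a + |r⁻¹ ^ s * (w.2 - p.2)| ^ b ≤ 1 := by
      rw [hball, ebig]
      rfl
    have eabs1 : |r⁻¹ * (w.1 - p.1)| = |(w.1 - p.1)/r| := by
      rw [inv_mul_eq_div]
    have eabs2 : |r⁻¹ ^ s * (w.2 - p.2)| = |(w.2 - p.2)/r^s| := by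
      rw [Real.inv_rpow hr.le, inv_mul_eq_div]
    rw [eabs1, eabs2] at hmem
    rw [h1]
    constructor
    · intro h
      rw [← hmem]
      show ρ.d (dil s r⁻¹ (w - p)) 0 ≤ 1
      rw [h2]
      rw [inv_mul_le_iff₀ hr, mul_one]
      exact h
    · intro h
      rw [← hmem] at h
      have h' : ρ.d (dil s r⁻¹ (w - p)) 0 ≤ 1 := h
      rw [h2, inv_mul_le_iff₀ hr, mul_one] at h'
      exact h'
  -- the configuration
  set ν : ℕ → ℝ := nwNu s a b with hν
  set R : ℕ → ℝ := nwR s a b with hR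
  set pt : ℕ → ℝ × ℝ :=
    fun k => (R k * (ν k) ^ a⁻¹, (R k) ^ s * (1 - ν k) ^ b⁻¹) with hpt
  have hRpos : ∀ k, 0 < R k := fun k => nwR_pos ha hb hs has k
  have hνpos : ∀ k, 0 < ν k := fun k => nwNu_pos ha hb hs has k
  have hνhalf : ∀ k, ν k ≤ 1/2 := fun k => nwNu_le_half ha hb hs has k
  -- the common point
  have common : ∀ k, ρ.d 0 (pt k) ≤ R k := by
    intro k
    rw [key 0 (pt k) (R k) (hRpos k)]
    have hRk := hRpos k
    have hRks : 0 < (R k) ^ s := Real.rpow_pos_of_pos hRk s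
    have e1 : ((0:ℝ×ℝ).1 - (pt k).1) / R k = -((ν k) ^ a⁻¹) := by
      show ((0:ℝ) - R k * (ν k) ^ a⁻¹) / R k = -((ν k) ^ a⁻¹)
      field_simp
      ring
    have e2 : ((0:ℝ×ℝ).2 - (pt k).2) / (R k) ^ s = -((1 - ν k) ^ b⁻¹) := by
      show ((0:ℝ) - (R k) ^ s * (1 - ν k) ^ b⁻¹) / (R k) ^ s = -((1 - ν k) ^ b⁻¹)
      field_simp
      ring
    rw [e1, e2, abs_neg, abs_neg,
      abs_of_nonneg (Real.rpow_nonneg (hνpos k).le _),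
      abs_of_nonneg (Real.rpow_nonneg (by linarith [hνhalf k] : (0:ℝ) ≤ 1 - ν k) _),
      Real.rpow_inv_rpow (hνpos k).le ha.ne',
      Real.rpow_inv_rpow (by linarith [hνhalf k] : (0:ℝ) ≤ 1 - ν k) hb.ne']
    linarith
  -- separation
  have sep : ∀ i j : ℕ, i < j → R j < ρ.d (pt i) (pt j) := by
    intro i j hij
    apply lt_of_not_ge
    intro hle
    rw [key (pt i) (pt j) (R j) (hRpos j)] at hle
    set P := nwP s a b i j with hP
    have hPpos : 0 < P := nwP_pos ha hb hs has i j
    have hRij : R i = P * R j := nwR_eq ha hb hs has i j hij.le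
    have hRj := hRpos j
    have hRjs : 0 < (R j) ^ s := Real.rpow_pos_of_pos hRj s
    have e1 : ((pt i).1 - (pt j).1) / R j = P * (ν i) ^ a⁻¹ - (ν j) ^ a⁻¹ := by
      show (R i * (ν i) ^ a⁻¹ - R j * (ν j) ^ a⁻¹) / R j = P * (ν i) ^ a⁻¹ - (ν j) ^ a⁻¹
      rw [hRij]
      field_simp
    have e2 : ((pt i).2 - (pt j).2) / (R j) ^ s
        = P ^ s * (1 - ν i) ^ b⁻¹ - (1 - ν j) ^ b⁻¹ := by
      show ((R i) ^ s * (1 - ν i) ^ b⁻¹ - (R j) ^ s * (1 - ν j) ^ b⁻¹) / (R j) ^ s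
        = P ^ s * (1 - ν i) ^ b⁻¹ - (1 - ν j) ^ b⁻¹
      rw [hRij, Real.mul_rpow hPpos.le hRj.le]
      field_simp
    rw [e1, e2] at hle
    -- contradict the core inequality
    have hPc : P ≤ nwc s a b i := nwP_le_c ha hb hs has i j hij
    have hci := nwc_pos ha hb hs has i
    have H1 : ν j ≤ P ^ a * ν i / nwG a b := nwNu_le ha hb hs has i j hij
    have H2 : P ^ (s - a) ≤ ν i / nwG a b := by
      have h := nwC_pow_sub ha hb hs has (hνpos i)
      have h2 : P ^ (s-a) ≤ (nwc s a b i) ^ (s-a) :=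
        Real.rpow_le_rpow hPpos.le hPc (by linarith)
      exact h2.trans h
    have H3 : P ^ s ≤ (2:ℝ) ^ (-b⁻¹) := by
      have h1 : P ≤ (2:ℝ) ^ (-(b*s)⁻¹) := hPc.trans nwC_le_base
      have h2 : P ^ s ≤ ((2:ℝ) ^ (-(b*s)⁻¹)) ^ s :=
        Real.rpow_le_rpow hPpos.le h1 hs.le
      have h3 : ((2:ℝ) ^ (-(b*s)⁻¹)) ^ s = (2:ℝ) ^ (-b⁻¹) := by
        rw [← Real.rpow_mul (by norm_num : (0:ℝ) ≤ 2)]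
        congr 1
        field_simp
      rwa [h3] at h2
    have hcore := nw_core ha hb hs has (hνpos i) (hνhalf i) (hνpos j) (hνhalf j)
      hPpos H1 H2 H3
    linarith
  -- assemble
  have main : ∀ Q : ℕ, ∃ (m : ℕ) (x : Fin m → ℝ × ℝ) (r : Fin m → ℝ),
      ρ.IsBesicovitch m x r ∧ Q < m := by
    intro Q
    refine ⟨Q + 1, fun i => pt i.val, fun i => R i.val, ⟨?_, ?_, ⟨0, ?_⟩⟩, by omega⟩
    · intro i
      exact hRpos i.val
    · intro i j hij
      have hne : i.val ≠ j.val := fun h => hij (Fin.ext h)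
      rcases lt_or_gt_of_ne hne with h | h
      · exact sep i.val j.val h
      · have h1 := sep j.val i.val h
        have h2 : R j.val ≤ R i.val := nwR_mono ha hb hs has j.val i.val h.le
        have h3 : ρ.d (pt i.val) (pt j.val) = ρ.d (pt j.val) (pt i.val) := ρ.symm _ _
        rw [h3]
        linarith
    · intro i
      exact common i.val
  refine ⟨main, ?_⟩
  rintro ⟨Q, hQ⟩
  obtain ⟨m, x, r, hbes, hQm⟩ := main Q
  have := hQ m x r hbes
  omega
end

section
/- Let a, b, s be reals with s > a > 0, b > 0, and let r > 1 satisfy (1 − r⁻¹)^a − r^{−a} > 0. Fix n ≥ 1, k ∈ {1,…,n}, and ε_k ∈ (0,1]. Define, for ε > 0, F(ε) := |ε(r^{−k} − r^{−(n+1)})|^a + |(1 − ε^a r^{−(n+1)a})^{1/b} − ε^s ε_k^{−s}(1 − ε_k^a r^{−ka})^{1/b}|^b. Then F(ε) = 1 + ε^a r^{−ak}((1 − r^{−(n+1)+k})^a − r^{(−(n+1)+k)a}) + o(ε^a) as ε → 0⁺; in particular there exists ε₀ > 0 such that F(ε) > 1 for all 0 < ε < ε₀. -/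
open Filter Topology

set_option maxHeartbeats 1000000 in
/-- asymptotic expansion of
`F(ε) = |ε(r^{-k} - r^{-(n+1)})|^a + |(1 - ε^a r^{-(n+1)a})^{1/b} - ε^s ε_k^{-s}(1 - ε_k^a r^{-ka})^{1/b}|^b`
as `ε → 0⁺`: `F(ε) = 1 + ε^a r^{-ak}((1 - r^{-(n+1)+k})^a - r^{(-(n+1)+k)a}) + o(ε^a)`;
in particular `F(ε) > 1` for all sufficiently small `ε > 0`. -/
theorem expansion_F (a b s r : ℝ) (ha : 0 < a) (has : a < s) (hb : 0 < b)
    (hr : 1 < r) (hrc : 0 < (1 - r⁻¹) ^ a - r ^ (-a))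
    (n k : ℕ) (hn : 1 ≤ n) (hk1 : 1 ≤ k) (hkn : k ≤ n)
    (εk : ℝ) (hεk0 : 0 < εk) (hεk1 : εk ≤ 1) :
    letI F : ℝ → ℝ := fun ε =>
      |ε * (r ^ (-(k : ℝ)) - r ^ (-((n : ℝ) + 1)))| ^ a +
        |(1 - ε ^ a * r ^ (-((n : ℝ) + 1) * a)) ^ (1 / b) -
            ε ^ s * εk ^ (-s) * (1 - εk ^ a * r ^ (-(k : ℝ) * a)) ^ (1 / b)| ^ b
    letI A : ℝ :=
      r ^ (-a * (k : ℝ)) *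
        ((1 - r ^ (-((n : ℝ) + 1) + (k : ℝ))) ^ a - r ^ ((-((n : ℝ) + 1) + (k : ℝ)) * a))
    Tendsto (fun ε : ℝ => (F ε - (1 + ε ^ a * A)) / ε ^ a) (𝓝[>] 0) (𝓝 0) ∧
    ∃ ε₀ > 0, ∀ ε : ℝ, 0 < ε → ε < ε₀ → 1 < F ε := by
  set F : ℝ → ℝ := fun ε =>
      |ε * (r ^ (-(k : ℝ)) - r ^ (-((n : ℝ) + 1)))| ^ a +
        |(1 - ε ^ a * r ^ (-((n : ℝ) + 1) * a)) ^ (1 / b) -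
            ε ^ s * εk ^ (-s) * (1 - εk ^ a * r ^ (-(k : ℝ) * a)) ^ (1 / b)| ^ b
    with hF_def
  set A : ℝ := r ^ (-a * (k : ℝ)) *
        ((1 - r ^ (-((n : ℝ) + 1) + (k : ℝ))) ^ a - r ^ ((-((n : ℝ) + 1) + (k : ℝ)) * a))
    with hA_def
  have hr0 : (0 : ℝ) < r := lt_trans one_pos hr
  set m : ℝ := r ^ (-((n : ℝ) + 1) * a) with hm
  set c : ℝ := r ^ (-(k : ℝ)) - r ^ (-((n : ℝ) + 1)) with hc
  set d : ℝ := εk ^ (-s) * (1 - εk ^ a * r ^ (-(k : ℝ) * a)) ^ (1 / b) with hd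
  have hm0 : 0 < m := Real.rpow_pos_of_pos hr0 _
  have hexp : -((n : ℝ) + 1) < -(k : ℝ) := by
    have : (k : ℝ) ≤ (n : ℝ) := by exact_mod_cast hkn
    linarith
  have hc0 : 0 < c := by
    have := (Real.rpow_lt_rpow_left_iff hr).2 hexp
    simpa [hc, sub_pos] using this
  have hd0 : 0 < d := by
    have h1 : εk ^ a ≤ 1 := Real.rpow_le_one hεk0.le hεk1 ha.le
    have h2 : r ^ (-(k : ℝ) * a) < 1 := by
      apply Real.rpow_lt_one_of_one_lt_of_neg hr
      have : (0 : ℝ) < (k : ℝ) := by exact_mod_cast hk1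
      nlinarith
    have h3 : εk ^ a * r ^ (-(k : ℝ) * a) < 1 := by
      have h4 : (0 : ℝ) < r ^ (-(k : ℝ) * a) := Real.rpow_pos_of_pos hr0 _
      nlinarith [Real.rpow_pos_of_pos hεk0 a]
    exact mul_pos (Real.rpow_pos_of_pos hεk0 _)
      (Real.rpow_pos_of_pos (by linarith) _)
  -- key algebraic identity : A = c ^ a - m
  have hfac : c = r ^ (-(k : ℝ)) * (1 - r ^ (-((n : ℝ) + 1) + (k : ℝ))) := by
    rw [hc, mul_sub, mul_one, ← Real.rpow_add hr0]
    ring_nf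
  have hsmall : r ^ (-((n : ℝ) + 1) + (k : ℝ)) < 1 := by
    apply Real.rpow_lt_one_of_one_lt_of_neg hr
    have : (k : ℝ) ≤ (n : ℝ) := by exact_mod_cast hkn
    linarith
  have hca : c ^ a = r ^ (-a * (k : ℝ)) * (1 - r ^ (-((n : ℝ) + 1) + (k : ℝ))) ^ a := by
    rw [hfac, Real.mul_rpow (Real.rpow_pos_of_pos hr0 _).le (by linarith),
      ← Real.rpow_mul hr0.le]
    ring_nf
  have hAcm : A = c ^ a - m := by
    show r ^ (-a * (k : ℝ)) *
        ((1 - r ^ (-((n : ℝ) + 1) + (k : ℝ))) ^ a - r ^ ((-((n : ℝ) + 1) + (k : ℝ)) * a))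
        = c ^ a - m
    rw [mul_sub, hca, hm, ← Real.rpow_add hr0]
    ring_nf
  have hA0 : 0 < A := by
    have h1 : r ^ (-((n : ℝ) + 1) + (k : ℝ)) ≤ r ^ (-1 : ℝ) := by
      apply (Real.rpow_le_rpow_left_iff hr).2
      have : (k : ℝ) ≤ (n : ℝ) := by exact_mod_cast hkn
      linarith
    have hrinv : r ^ (-1 : ℝ) = r⁻¹ := Real.rpow_neg_one r
    have hrinv1 : r⁻¹ < 1 := inv_lt_one_of_one_lt₀ hr
    have h2 : (1 - r⁻¹) ^ a ≤ (1 - r ^ (-((n : ℝ) + 1) + (k : ℝ))) ^ a := by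
      apply Real.rpow_le_rpow (by linarith) (by rw [← hrinv]; linarith) ha.le
    have h3 : r ^ ((-((n : ℝ) + 1) + (k : ℝ)) * a) ≤ r ^ (-a) := by
      apply (Real.rpow_le_rpow_left_iff hr).2
      have : (k : ℝ) ≤ (n : ℝ) := by exact_mod_cast hkn
      nlinarith
    have : 0 < (1 - r ^ (-((n : ℝ) + 1) + (k : ℝ))) ^ a
        - r ^ ((-((n : ℝ) + 1) + (k : ℝ)) * a) := by linarith
    exact mul_pos (Real.rpow_pos_of_pos hr0 _) this
  clear_value F A m c d
  -- the functions u, v, w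
  set u : ℝ → ℝ := fun ε => (1 - ε ^ a * m) ^ (1 / b) with hu_def
  set v : ℝ → ℝ := fun ε => ε ^ s * d with hv_def
  set w : ℝ → ℝ := fun ε => v ε / u ε with hw_def
  clear_value u v w
  -- basic tendsto facts
  have hpow_tendsto : ∀ t : ℝ, 0 < t →
      Tendsto (fun ε : ℝ => ε ^ t) (𝓝[>] (0 : ℝ)) (𝓝 0) := by
    intro t ht
    have hcont := (Real.continuousAt_rpow_const 0 t (Or.inr ht.le)).tendsto
    rw [Real.zero_rpow ht.ne'] at hcont
    exact hcont.mono_left nhdsWithin_le_nhds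
  have hεa := hpow_tendsto a ha
  have hεs := hpow_tendsto s (lt_trans ha has)
  have hεsa := hpow_tendsto (s - a) (by linarith)
  have hbase_tendsto : Tendsto (fun ε : ℝ => 1 - ε ^ a * m) (𝓝[>] (0 : ℝ)) (𝓝 1) := by
    have := (tendsto_const_nhds : Tendsto (fun _ : ℝ => (1 : ℝ)) (𝓝[>] 0) (𝓝 1)).sub
      (hεa.mul_const m)
    simpa using this
  have hu_tendsto : Tendsto u (𝓝[>] (0 : ℝ)) (𝓝 1) := by
    have hcont := (Real.continuousAt_rpow_const 1 (1 / b) (Or.inl one_ne_zero)).tendsto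
    rw [Real.one_rpow] at hcont
    rw [hu_def]
    exact hcont.comp hbase_tendsto
  have hv_tendsto : Tendsto v (𝓝[>] (0 : ℝ)) (𝓝 0) := by
    rw [hv_def]
    have := hεs.mul_const d
    simpa using this
  -- eventual facts
  have E0 : ∀ᶠ ε in 𝓝[>] (0 : ℝ), (0 : ℝ) < ε := self_mem_nhdsWithin
  have E1 : ∀ᶠ ε in 𝓝[>] (0 : ℝ), ε ^ a * m < 1 / 2 :=
    (hεa.mul_const m).eventually_lt_const (by norm_num)
  have E2 : ∀ᶠ ε in 𝓝[>] (0 : ℝ), v ε < u ε :=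
    hv_tendsto.eventually_lt hu_tendsto one_pos
  -- positivity of u eventually and pointwise facts
  have hu_pos : ∀ ε : ℝ, 0 < ε → ε ^ a * m < 1 / 2 → 0 < u ε := by
    intro ε hε0 hε1
    rw [hu_def]
    exact Real.rpow_pos_of_pos (by linarith) _
  -- the slope function
  set Φ : ℝ → ℝ := fun x => ((1 - x) ^ b - 1) / x with hΦ_def
  clear_value Φ
  have hΦ_tendsto : Tendsto Φ (𝓝[≠] (0 : ℝ)) (𝓝 (-b)) := by
    have hder : HasDerivAt (fun x : ℝ => (1 - x) ^ b) (-b) 0 := by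
      have h1 : HasDerivAt (fun y : ℝ => y ^ b) (b * (1 : ℝ) ^ (b - 1)) 1 :=
        Real.hasDerivAt_rpow_const (Or.inl one_ne_zero)
      have h2 : HasDerivAt (fun x : ℝ => 1 - x) (-1) 0 := by
        simpa using (hasDerivAt_id (0 : ℝ)).const_sub 1
      have h3 := HasDerivAt.comp (0 : ℝ) (by simpa using h1) h2
      exact (by simpa using h3 : HasDerivAt ((fun y : ℝ => y ^ b) ∘ fun x => 1 - x) (-b) 0)
    have := hasDerivAt_iff_tendsto_slope.mp hder
    refine this.congr' ?_
    filter_upwards [self_mem_nhdsWithin] with x hx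
    simp only [Set.mem_compl_iff, Set.mem_singleton_iff] at hx
    simp [slope_def_field, hΦ_def, sub_zero, Real.one_rpow]
  have hw_tendsto : Tendsto w (𝓝[>] (0 : ℝ)) (𝓝[≠] (0 : ℝ)) := by
    apply tendsto_nhdsWithin_of_tendsto_nhds_of_eventually_within
    · have := hv_tendsto.div hu_tendsto one_ne_zero
      rw [zero_div] at this
      rw [hw_def]; exact this
    · filter_upwards [E0, E1] with ε hε0 hε1
      have hu0 := hu_pos ε hε0 hε1
      have hv0 : 0 < v ε := by
        rw [hv_def]; exact mul_pos (Real.rpow_pos_of_pos hε0 _) hd0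
      have : 0 < w ε := by rw [hw_def]; exact div_pos hv0 hu0
      simp only [Set.mem_compl_iff, Set.mem_singleton_iff]
      exact this.ne'
  have hub_tendsto : Tendsto (fun ε => (u ε) ^ b) (𝓝[>] (0 : ℝ)) (𝓝 1) := by
    have hcont := (Real.continuousAt_rpow_const 1 b (Or.inl one_ne_zero)).tendsto
    rw [Real.one_rpow] at hcont
    exact hcont.comp hu_tendsto
  have hwa_tendsto : Tendsto (fun ε => w ε / ε ^ a) (𝓝[>] (0 : ℝ)) (𝓝 0) := by
    have h1 : Tendsto (fun ε : ℝ => ε ^ (s - a) * d / u ε) (𝓝[>] (0 : ℝ)) (𝓝 0) := by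
      have := (hεsa.mul_const d).div hu_tendsto one_ne_zero
      rw [zero_mul, zero_div] at this
      exact this
    refine h1.congr' ?_
    filter_upwards [E0] with ε hε0
    have : ε ^ (s - a) = ε ^ s / ε ^ a := Real.rpow_sub hε0 s a
    rw [this]
    simp only [hw_def, hv_def]
    ring
  have hprod : Tendsto (fun ε => (u ε) ^ b * Φ (w ε) * (w ε / ε ^ a))
      (𝓝[>] (0 : ℝ)) (𝓝 0) := by
    have := (hub_tendsto.mul (hΦ_tendsto.comp hw_tendsto)).mul hwa_tendsto
    simpa using this
  -- the eventual equality
  have heq : ∀ᶠ ε in 𝓝[>] (0 : ℝ),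
      (u ε) ^ b * Φ (w ε) * (w ε / ε ^ a) = (F ε - (1 + ε ^ a * A)) / ε ^ a := by
    filter_upwards [E0, E1, E2] with ε hε0 hε1 hε2
    have hεa0 : 0 < ε ^ a := Real.rpow_pos_of_pos hε0 a
    have hbase0 : 0 < 1 - ε ^ a * m := by linarith
    have hu0 : 0 < u ε := hu_pos ε hε0 hε1
    have hv0 : 0 < v ε := by
      rw [hv_def]; exact mul_pos (Real.rpow_pos_of_pos hε0 _) hd0
    have hweq' : w ε = v ε / u ε := by rw [hw_def]
    have hw0 : 0 < w ε := by rw [hweq']; exact div_pos hv0 hu0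
    have hw1 : w ε < 1 := by rw [hweq']; exact (div_lt_one hu0).2 hε2
    -- F ε rewritten
    have hub_eq : (u ε) ^ b = 1 - ε ^ a * m := by
      rw [hu_def]
      show ((1 - ε ^ a * m) ^ (1 / b)) ^ b = 1 - ε ^ a * m
      rw [← Real.rpow_mul hbase0.le, one_div_mul_cancel hb.ne', Real.rpow_one]
    have hF0 : F ε = |ε * c| ^ a +
        |u ε - ε ^ s * εk ^ (-s) * (1 - εk ^ a * r ^ (-(k : ℝ) * a)) ^ (1 / b)| ^ b := by
      rw [hF_def, hu_def]
    have hveq : ε ^ s * εk ^ (-s) * (1 - εk ^ a * r ^ (-(k : ℝ) * a)) ^ (1 / b) = v ε := by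
      rw [hv_def]
      dsimp only
      rw [hd]
      ring
    have hF : F ε = ε ^ a * c ^ a + (u ε - v ε) ^ b := by
      rw [hF0, hveq, abs_of_pos (mul_pos hε0 hc0), Real.mul_rpow hε0.le hc0.le,
        abs_of_pos (sub_pos.2 hε2)]
    have hmul : u ε * (1 - w ε) = u ε - v ε := by
      rw [hweq']
      field_simp [hu0.ne']
    have key : (u ε - v ε) ^ b = (u ε) ^ b * (1 - w ε) ^ b := by
      rw [← Real.mul_rpow hu0.le (by linarith : (0 : ℝ) ≤ 1 - w ε), hmul]
    have hone : (1 : ℝ) + ε ^ a * (c ^ a - m) = ε ^ a * c ^ a + (u ε) ^ b := by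
      rw [hub_eq]; ring
    rw [hF, hAcm, key, hone]
    simp only [hΦ_def]
    have halg : ∀ X Y W E C : ℝ, W ≠ 0 → E ≠ 0 →
        X * ((Y - 1) / W) * (W / E) = (E * C + X * Y - (E * C + X)) / E := by
      intro X Y W E C hW hE
      field_simp
      ring
    exact halg _ _ _ _ _ hw0.ne' hεa0.ne'
  constructor
  · exact hprod.congr' heq
  · have hT : Tendsto (fun ε : ℝ => (F ε - (1 + ε ^ a * A)) / ε ^ a) (𝓝[>] (0 : ℝ)) (𝓝 0) :=
      hprod.congr' heq
    have hev : ∀ᶠ ε in 𝓝[>] (0 : ℝ), 1 < F ε := by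
      filter_upwards [hT.eventually_const_lt (neg_lt_zero.2 hA0), E0] with ε hlt hε0
      have hεa0 : 0 < ε ^ a := Real.rpow_pos_of_pos hε0 a
      have h2 : -A * ε ^ a < F ε - (1 + ε ^ a * A) := (lt_div_iff₀ hεa0).1 hlt
      have h3 : ε ^ a * A = A * ε ^ a := mul_comm _ _
      linarith
    obtain ⟨ε₀, hε₀, hsub⟩ := mem_nhdsGT_iff_exists_Ioo_subset.1 hev
    exact ⟨ε₀, hε₀, fun ε h1 h2 => hsub ⟨h1, h2⟩⟩
end
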